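/- Let a11, a20, a21, b11, b20, b21 be real numbers with b11 ≠ 0, a20 = a11 b20 / b11 (inflection point of real type), and a11 b21 − a21 b11 ≠ 0. Then the quadratic form Q(x,y) obtained as the 2-jet of g at the origin with parameters (β, μ) = (b20, a20) (and λ, α arbitrary) has discriminant D1 = 4 b20² (a11 b21 − a21 b11)² / b11², which is strictly positive provided b20 ≠ 0; hence g has a Morse A1⁻ singularity (equivalent to x² − y²). -/

import Mathlib

/-!
The inflection condition `a20 b11 = a11 b20` kills both linear coefficients of `j²g` (each is a
multiple of `b11 a20 − a11 b20`) and turns half the `xy`-coefficient into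
`b20 (a11 b21 − a21 b11) / b11`. The quadratic part has no `y²` term, so its discriminant is the
square of the `xy`-coefficient.
-/

lemma inflection_cross_eq_zero {a11 a20 b11 b20 : ℝ} (hb11 : b11 ≠ 0)
    (ha20 : a20 = a11 * b20 / b11) : b11 * a20 - a11 * b20 = 0 := by
  rw [ha20, mul_div_cancel₀ _ hb11]
  ring

lemma inflection_mixed_coeff_eq {a11 a20 a21 b11 b20 b21 : ℝ} (hb11 : b11 ≠ 0)
    (ha20 : a20 = a11 * b20 / b11) :
    b21 * a20 - a21 * b20 = b20 * (a11 * b21 - a21 * b11) / b11 := by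
  subst ha20
  field_simp

/-- At an inflection point of real type (`b11 ≠ 0`,
`a20 = a11 b20 / b11`) with `a11 b21 − a21 b11 ≠ 0`, taking the plane
parameters `(β, μ) = (b20, a20)`, the 1-jet of the singular-set function `g`
vanishes, and the quadratic part `P x² + Q xy` of `j²g` (with
`P = 2(a20 b11 − a11 b20)λ + α(b21 μ − a21 β) + 3(b30 μ − a30 β)` and
`Q = 2(b21 μ − a21 β)`) has discriminant
`D1 = Q² − 4·P·0 = 4 b20² (a11 b21 − a21 b11)² / b11²`, which is strictly
positive when `b20 ≠ 0`; hence the quadratic part is nondegenerate indefinite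
and `g` has a Morse `A1⁻` singularity (equivalent to `x² − y²`). -/
theorem morse_A1_minus_at_inflection_special_plane
    (a11 a20 a21 a30 b11 b20 b21 b30 α lam : ℝ)
    (hb11 : b11 ≠ 0) (ha20 : a20 = a11 * b20 / b11)
    (h21 : a11 * b21 - a21 * b11 ≠ 0) :
    -- with (β, μ) = (b20, a20):
    ((α * b11 + 2 * b20) * a20 - (a11 * α + 2 * a20) * b20 = 0) ∧
    (b11 * a20 - a11 * b20 = 0) ∧
    ((2 * (b21 * a20 - a21 * b20)) ^ 2 -
        4 * (2 * (a20 * b11 - a11 * b20) * lam + α * (b21 * a20 - a21 * b20) +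
              3 * (b30 * a20 - a30 * b20)) * 0 =
      4 * b20 ^ 2 * (a11 * b21 - a21 * b11) ^ 2 / b11 ^ 2) ∧
    (b20 ≠ 0 →
      0 < 4 * b20 ^ 2 * (a11 * b21 - a21 * b11) ^ 2 / b11 ^ 2) := by
  have hcross := inflection_cross_eq_zero hb11 ha20
  refine ⟨by linear_combination α * hcross, hcross, ?_, fun hb20 => by positivity⟩
  rw [mul_zero, sub_zero, inflection_mixed_coeff_eq hb11 ha20]
  field_simp
  ring
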